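/- arXiv:2603.00269 — 3 statements merged into one kernel-verified Lean document; each statement's English description precedes it below -/
import Mathlib

section
/- Let a > 0 and b ∈ ℝᵖ, set y'ᵢ = a·yᵢ + xᵢᵀb, and fix ν > 0. If the set S = { ℓ(β,σ,ν;y) : β ∈ ℝᵖ, σ > 0 } is bounded above, then the set S' = { ℓ(β,σ,ν;y') : β ∈ ℝᵖ, σ > 0 } equals the image of S under the map t ↦ t − n·log a, and consequently sSup S' = sSup S − n·log a; that is, the profile log-likelihood of ν is shifted by the constant −n·log a under the transformation. -/
open Real Finset

/-- Student-t regression log-likelihood. -/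
noncomputable def ell (n p : ℕ) (y : Fin n → ℝ) (x : Fin n → Fin p → ℝ)
    (β : Fin p → ℝ) (σ ν : ℝ) : ℝ :=
  (n : ℝ) * Real.log (Real.Gamma ((ν + 1) / 2))
    - (n : ℝ) * Real.log (Real.Gamma (ν / 2))
    - ((n : ℝ) / 2) * Real.log (Real.pi * ν)
    - (n : ℝ) * Real.log σ
    - ((ν + 1) / 2) * ∑ i, Real.log (1 + (y i - ∑ j, x i j * β j) ^ 2 / (ν * σ ^ 2))

lemma ell_shift (n p : ℕ) (y : Fin n → ℝ) (x : Fin n → Fin p → ℝ)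
    (a : ℝ) (ha : 0 < a) (b : Fin p → ℝ) (ν : ℝ) (hν : 0 < ν)
    (β : Fin p → ℝ) (σ : ℝ) (hσ : 0 < σ) :
    ell n p (fun i => a * y i + ∑ j, x i j * b j) x β σ ν
      = ell n p y x (fun j => (β j - b j) / a) (σ / a) ν - (n : ℝ) * Real.log a := by
  unfold ell
  have hlog : Real.log (σ / a) = Real.log σ - Real.log a :=
    Real.log_div (ne_of_gt hσ) (ne_of_gt ha)
  have hsum : ∀ i, (a * y i + ∑ j, x i j * b j - ∑ j, x i j * β j) ^ 2 / (ν * σ ^ 2)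
      = (y i - ∑ j, x i j * ((β j - b j) / a)) ^ 2 / (ν * (σ / a) ^ 2) := by
    intro i
    have hs : ∑ j, x i j * ((β j - b j) / a)
        = (∑ j, x i j * β j - ∑ j, x i j * b j) / a := by
      rw [eq_div_iff (ne_of_gt ha), Finset.sum_mul, ← Finset.sum_sub_distrib]
      refine Finset.sum_congr rfl fun j _ => ?_
      field_simp
    rw [hs]
    field_simp
    ring
  rw [hlog]
  have hsame : (∑ i, Real.log (1 + (a * y i + ∑ j, x i j * b j - ∑ j, x i j * β j) ^ 2 / (ν * σ ^ 2)))
      = ∑ i, Real.log (1 + (y i - ∑ j, x i j * ((β j - b j) / a)) ^ 2 / (ν * (σ / a) ^ 2)) := by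
    exact Finset.sum_congr rfl fun i _ => by rw [hsum i]
  rw [hsame]
  ring

theorem studentT_profile_loglik_shift
    (n p : ℕ) (y : Fin n → ℝ) (x : Fin n → Fin p → ℝ)
    (a : ℝ) (ha : 0 < a) (b : Fin p → ℝ)
    (ν : ℝ) (hν : 0 < ν)
    (S S' : Set ℝ)
    (hS : S = {t : ℝ | ∃ (β : Fin p → ℝ) (σ : ℝ), 0 < σ ∧ t = ell n p y x β σ ν})
    (hS' : S' = {t : ℝ | ∃ (β : Fin p → ℝ) (σ : ℝ), 0 < σ ∧
        t = ell n p (fun i => a * y i + ∑ j, x i j * b j) x β σ ν})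
    (hBdd : BddAbove S) :
    S' = (fun t : ℝ => t - (n : ℝ) * Real.log a) '' S ∧
      sSup S' = sSup S - (n : ℝ) * Real.log a := by
  have himg : S' = (fun t : ℝ => t - (n : ℝ) * Real.log a) '' S := by
    subst hS hS'
    ext t
    constructor
    · rintro ⟨β, σ, hσ, rfl⟩
      refine ⟨ell n p y x (fun j => (β j - b j) / a) (σ / a) ν,
        ⟨fun j => (β j - b j) / a, σ / a, div_pos hσ ha, rfl⟩, ?_⟩
      simp only
      rw [ell_shift n p y x a ha b ν hν β σ hσ]
    · rintro ⟨s, ⟨β, σ, hσ, rfl⟩, rfl⟩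
      refine ⟨fun j => a * β j + b j, a * σ, mul_pos ha hσ, ?_⟩
      rw [ell_shift n p y x a ha b ν hν (fun j => a * β j + b j) (a * σ) (mul_pos ha hσ)]
      congr 2
      · funext j
        field_simp
        ring
      · field_simp
  refine ⟨himg, ?_⟩
  have hne : S.Nonempty := by
    subst hS
    exact ⟨ell n p y x (fun _ => 0) 1 ν, fun _ => 0, 1, one_pos, rfl⟩
  rw [himg]
  exact (Monotone.map_csSup_of_continuousAt
    (continuousAt_id.sub continuousAt_const)
    (fun u v huv => sub_le_sub_right huv _) hne hBdd).symm
end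

section
/- Let a > 0 and b ∈ ℝᵖ, set y'ᵢ = a·yᵢ + xᵢᵀb, and fix ν > 0. Suppose (β̂, σ̂) ∈ ℝᵖ × (0,∞) and that det j(ν, β̂, σ̂; y) > 0. Then the adjusted profile log-likelihood quantity satisfies ℓ(aβ̂+b, aσ̂, ν; y') − (1/2)·log det j(ν, aβ̂+b, aσ̂; y') = ℓ(β̂, σ̂, ν; y) − (1/2)·log det j(ν, β̂, σ̂; y) − n·log a + (p+1)·log a. -/
open Real Finset

/-- Observed information matrix for the nuisance parameters `λ = (β, σ)` in the
Student-t regression model, indexed by `Fin p ⊕ Unit`. -/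
noncomputable def obsInfo (n p : ℕ) (y : Fin n → ℝ) (x : Fin n → Fin p → ℝ)
    (ν : ℝ) (β : Fin p → ℝ) (σ : ℝ) :
    Matrix (Fin p ⊕ Unit) (Fin p ⊕ Unit) ℝ :=
  fun k l =>
    match k, l with
    | Sum.inl k, Sum.inl l =>
        (ν + 1) * ∑ i, x i k * x i l *
          (ν * σ ^ 2 - (y i - ∑ j, x i j * β j) ^ 2) /
            (ν * σ ^ 2 + (y i - ∑ j, x i j * β j) ^ 2) ^ 2
    | Sum.inl k, Sum.inr _ =>
        2 * ν * σ * (ν + 1) * ∑ i, (y i - ∑ j, x i j * β j) * x i k /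
          (ν * σ ^ 2 + (y i - ∑ j, x i j * β j) ^ 2) ^ 2
    | Sum.inr _, Sum.inl l =>
        2 * ν * σ * (ν + 1) * ∑ i, (y i - ∑ j, x i j * β j) * x i l /
          (ν * σ ^ 2 + (y i - ∑ j, x i j * β j) ^ 2) ^ 2
    | Sum.inr _, Sum.inr _ =>
        -(n : ℝ) / σ ^ 2 + (ν + 1) * ∑ i,
          ((y i - ∑ j, x i j * β j) ^ 2 /
              (σ ^ 2 * (ν * σ ^ 2 + (y i - ∑ j, x i j * β j) ^ 2))
            + 2 * ν * (y i - ∑ j, x i j * β j) ^ 2 /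
                (ν * σ ^ 2 + (y i - ∑ j, x i j * β j) ^ 2) ^ 2)

set_option maxHeartbeats 1000000 in
theorem adjusted_profile_loglik_shift
    (n p : ℕ) (y : Fin n → ℝ) (x : Fin n → Fin p → ℝ)
    (a : ℝ) (ha : 0 < a) (b : Fin p → ℝ)
    (ν : ℝ) (hν : 0 < ν)
    (βhat : Fin p → ℝ) (σhat : ℝ) (hσhat : 0 < σhat)
    (hdet : 0 < (obsInfo n p y x ν βhat σhat).det) :
    ell n p (fun i => a * y i + ∑ j, x i j * b j) x
        (fun j => a * βhat j + b j) (a * σhat) ν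
      - (1 / 2) * Real.log
          (obsInfo n p (fun i => a * y i + ∑ j, x i j * b j) x ν
            (fun j => a * βhat j + b j) (a * σhat)).det
      = ell n p y x βhat σhat ν
          - (1 / 2) * Real.log (obsInfo n p y x ν βhat σhat).det
          - (n : ℝ) * Real.log a + ((p : ℝ) + 1) * Real.log a := by
  have ha0 : a ≠ 0 := ne_of_gt ha
  have hσ0 : σhat ≠ 0 := ne_of_gt hσhat
  -- residual transformation
  have hr : ∀ i, a * y i + (∑ j, x i j * b j) - ∑ j, x i j * (a * βhat j + b j)
      = a * (y i - ∑ j, x i j * βhat j) := by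
    intro i
    have h : ∑ j, x i j * (a * βhat j + b j)
        = a * (∑ j, x i j * βhat j) + ∑ j, x i j * b j := by
      rw [Finset.mul_sum, ← Finset.sum_add_distrib]
      exact Finset.sum_congr rfl (fun j _ => by ring)
    rw [h]; ring
  have hden : ∀ i, ν * σhat ^ 2 + (y i - ∑ j, x i j * βhat j) ^ 2 ≠ 0 := by
    intro i
    have : 0 < ν * σhat ^ 2 + (y i - ∑ j, x i j * βhat j) ^ 2 := by positivity
    exact ne_of_gt this
  -- matrix scaling
  have hM : obsInfo n p (fun i => a * y i + ∑ j, x i j * b j) x ν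
      (fun j => a * βhat j + b j) (a * σhat)
      = (a ^ 2)⁻¹ • obsInfo n p y x ν βhat σhat := by
    ext k l
    cases k with
    | inl k =>
      cases l with
      | inl l =>
        simp only [obsInfo, Matrix.smul_apply, smul_eq_mul, hr, Finset.mul_sum]
        refine Finset.sum_congr rfl fun i _ => ?_
        field_simp
      | inr l =>
        simp only [obsInfo, Matrix.smul_apply, smul_eq_mul, hr, Finset.mul_sum]
        refine Finset.sum_congr rfl fun i _ => ?_
        field_simp
    | inr k =>
      cases l with
      | inl l =>
        simp only [obsInfo, Matrix.smul_apply, smul_eq_mul, hr, Finset.mul_sum]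
        refine Finset.sum_congr rfl fun i _ => ?_
        field_simp
      | inr l =>
        simp only [obsInfo, Matrix.smul_apply, smul_eq_mul, hr]
        simp only [mul_add, Finset.mul_sum]
        have h1 : -(n:ℝ) / (a * σhat) ^ 2 = (a^2)⁻¹ * (-(n:ℝ) / σhat ^ 2) := by
          field_simp
        rw [h1]
        congr 1
        refine Finset.sum_congr rfl fun i _ => ?_
        have hd := hden i
        set r := y i - ∑ j, x i j * βhat j with hrdef
        field_simp
  -- determinant
  have hcard : Fintype.card (Fin p ⊕ Unit) = p + 1 := by simp
  have hdet' : (obsInfo n p (fun i => a * y i + ∑ j, x i j * b j) x ν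
      (fun j => a * βhat j + b j) (a * σhat)).det
      = ((a ^ 2)⁻¹) ^ (p + 1) * (obsInfo n p y x ν βhat σhat).det := by
    rw [hM, Matrix.det_smul, hcard]
  have hlogdet : Real.log ((obsInfo n p (fun i => a * y i + ∑ j, x i j * b j) x ν
      (fun j => a * βhat j + b j) (a * σhat)).det)
      = -(2 * ((p:ℝ)+1) * Real.log a) + Real.log ((obsInfo n p y x ν βhat σhat).det) := by
    rw [hdet', Real.log_mul (by positivity) (ne_of_gt hdet), Real.log_pow,
      Real.log_inv, Real.log_pow]
    push_cast
    ring
  -- ell transformation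
  have hlog_aσ : Real.log (a * σhat) = Real.log a + Real.log σhat :=
    Real.log_mul ha0 hσ0
  have hsum : ∀ i, (1 + (a * y i + (∑ j, x i j * b j) - ∑ j, x i j * (a * βhat j + b j)) ^ 2
      / (ν * (a * σhat) ^ 2))
      = 1 + (y i - ∑ j, x i j * βhat j) ^ 2 / (ν * σhat ^ 2) := by
    intro i
    rw [hr]
    congr 1
    field_simp
  simp only [ell, hlogdet, hlog_aσ, hsum]
  ring
end

section
/- Let E be the Euclidean space ℝᵐ and let f : ℝ × E → ℝ be twice continuously differentiable. Suppose λ̂ : ℝ → E is differentiable in a neighborhood of ν₀ and that for all ν in that neighborhood ∇_λ f(ν, λ̂(ν)) = 0. Let H be the Hessian of f in λ at (ν₀, λ̂(ν₀)), assumed invertible, and let m = (∂/∂ν) ∇_λ f at (ν₀, λ̂(ν₀)). Then the profile function g(ν) = f(ν, λ̂(ν)) is twice differentiable at ν₀ with g''(ν₀) = f_{νν}(ν₀, λ̂(ν₀)) − ⟪m, H⁻¹ m⟫, where f_{νν} is the second partial derivative of f in ν. -/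
open Filter
open scoped RealInnerProductSpace

abbrev Ev (m : ℕ) := EuclideanSpace ℝ (Fin m)

theorem profile_loglik_second_derivative
    (m : ℕ) (f : ℝ × EuclideanSpace ℝ (Fin m) → ℝ)
    (hf : ContDiff ℝ 2 f)
    (lamhat : ℝ → EuclideanSpace ℝ (Fin m)) (ν₀ : ℝ)
    (hlam : ∀ᶠ ν in nhds ν₀, DifferentiableAt ℝ lamhat ν)
    (hcrit : ∀ᶠ ν in nhds ν₀,
      gradient (fun l : EuclideanSpace ℝ (Fin m) => f (ν, l)) (lamhat ν) = 0)
    (H Hinv : EuclideanSpace ℝ (Fin m) →L[ℝ] EuclideanSpace ℝ (Fin m))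
    (hH : H = fderiv ℝ
      (fun l : EuclideanSpace ℝ (Fin m) =>
        gradient (fun l' : EuclideanSpace ℝ (Fin m) => f (ν₀, l')) l) (lamhat ν₀))
    (hHinv₁ : H.comp Hinv = ContinuousLinearMap.id ℝ (EuclideanSpace ℝ (Fin m)))
    (hHinv₂ : Hinv.comp H = ContinuousLinearMap.id ℝ (EuclideanSpace ℝ (Fin m)))
    (mvec : EuclideanSpace ℝ (Fin m))
    (hm : mvec = deriv
      (fun ν : ℝ =>
        gradient (fun l : EuclideanSpace ℝ (Fin m) => f (ν, l)) (lamhat ν₀)) ν₀)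
    (g : ℝ → ℝ) (hg : g = fun ν : ℝ => f (ν, lamhat ν))
    (fνν : ℝ) (hfνν : fνν = deriv (deriv (fun t : ℝ => f (t, lamhat ν₀))) ν₀) :
    DifferentiableAt ℝ g ν₀ ∧ DifferentiableAt ℝ (deriv g) ν₀ ∧
      deriv (deriv g) ν₀ = fνν - ⟪mvec, Hinv mvec⟫ := by
  subst hg hH hm hfνν
  -- basic differentiability facts
  have hfd : Differentiable ℝ f := hf.differentiable two_ne_zero
  have hf1 : ContDiff ℝ 1 (fderiv ℝ f) := hf.fderiv_right (by norm_num)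
  have hf'd : Differentiable ℝ (fderiv ℝ f) := hf1.differentiable one_ne_zero
  set p₀ : ℝ × (Ev m) := (ν₀, lamhat ν₀) with hp₀
  -- the gradient-in-λ map G
  set G : ℝ × (Ev m) → (Ev m) := fun p => (InnerProductSpace.toDual ℝ (Ev m)).symm
      ((fderiv ℝ f p).comp (ContinuousLinearMap.inr ℝ ℝ (Ev m))) with hGdef
  have hpartial : ∀ p : ℝ × (Ev m), HasFDerivAt (fun l' : (Ev m) => f (p.1, l'))
      ((fderiv ℝ f p).comp (ContinuousLinearMap.inr ℝ ℝ (Ev m))) p.2 :=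
    fun p => (hfd p).hasFDerivAt.comp p.2 (hasFDerivAt_prodMk_right p.1 p.2)
  have hGgrad : ∀ (ν : ℝ) (l : (Ev m)), gradient (fun l' : (Ev m) => f (ν, l')) l = G (ν, l) := by
    intro ν l
    rw [gradient, (hpartial (ν, l)).fderiv]
  have hGinner : ∀ (p : ℝ × (Ev m)) (v : (Ev m)), ⟪G p, v⟫ = fderiv ℝ f p (0, v) := by
    intro p v
    simp [hGdef, InnerProductSpace.toDual_symm_apply]
  have hGc : ContDiff ℝ 1 G :=
    (LinearIsometryEquiv.contDiff _).comp (hf1.clm_comp contDiff_const)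
  have hGd : Differentiable ℝ G := hGc.differentiable one_ne_zero
  -- φ : partial derivative of f in ν
  set φ : ℝ × (Ev m) → ℝ := fun p => fderiv ℝ f p (1, 0) with hφdef
  have hφc : ContDiff ℝ 1 φ := hf1.clm_apply contDiff_const
  have hφd : Differentiable ℝ φ := hφc.differentiable one_ne_zero
  -- the curve γ
  set γ : ℝ → ℝ × (Ev m) := fun ν => (ν, lamhat ν) with hγdef
  have hγ : ∀ ν : ℝ, DifferentiableAt ℝ lamhat ν →
      HasDerivAt γ (1, deriv lamhat ν) ν :=
    fun ν h => HasDerivAt.prodMk (hasDerivAt_id ν) h.hasDerivAt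
  set lam' : (Ev m) := deriv lamhat ν₀ with hlam'def
  have hlam₀ : DifferentiableAt ℝ lamhat ν₀ := hlam.self_of_nhds
  -- first derivative of g
  have hderivg : deriv (fun ν : ℝ => f (ν, lamhat ν)) =ᶠ[nhds ν₀] fun ν => φ (γ ν) := by
    filter_upwards [hlam, hcrit] with ν h1 h2
    have hgd : HasDerivAt (fun ν : ℝ => f (ν, lamhat ν))
        (fderiv ℝ f (γ ν) (1, deriv lamhat ν)) ν :=
      (hfd (γ ν)).hasFDerivAt.comp_hasDerivAt ν (hγ ν h1)
    have hsplit : ((1 : ℝ), deriv lamhat ν) = (1, 0) + (0, deriv lamhat ν) := by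
      simp [Prod.ext_iff]
    have hz : fderiv ℝ f (γ ν) (0, deriv lamhat ν) = 0 := by
      rw [← hGinner (γ ν)]
      rw [hGgrad ν (lamhat ν)] at h2
      simp [hγdef, h2]
    rw [hgd.deriv, hsplit, map_add, hz, add_zero]
  -- differentiability of g at ν₀
  have hgdiff : DifferentiableAt ℝ (fun ν : ℝ => f (ν, lamhat ν)) ν₀ :=
    (hfd p₀).comp ν₀ (differentiableAt_id.prodMk hlam₀)
  refine ⟨hgdiff, ?_, ?_⟩
  -- second derivative computation
  · exact ((hφd p₀).comp (f := γ) ν₀ (hγ ν₀ hlam₀).differentiableAt).congr_of_eventuallyEq hderivg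
  · set f'' : ℝ × (Ev m) →L[ℝ] ℝ × (Ev m) →L[ℝ] ℝ := fderiv ℝ (fderiv ℝ f) p₀ with hf''def
    have hsymm : ∀ u v : ℝ × (Ev m), f'' u v = f'' v u :=
      second_derivative_symmetric (fun y => (hfd y).hasFDerivAt) (hf'd p₀).hasFDerivAt
    -- fderiv of φ
    have hφ' : HasFDerivAt φ ((ContinuousLinearMap.apply ℝ ℝ ((1 : ℝ), (0 : (Ev m)))).comp f'') p₀ :=
      (ContinuousLinearMap.apply ℝ ℝ ((1 : ℝ), (0 : (Ev m)))).hasFDerivAt.comp p₀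
        (hf'd p₀).hasFDerivAt
    -- fderiv G at p₀ along (1,0) is mvec ; along (0,v) is H v
    have hmvec : deriv (fun ν : ℝ => gradient (fun l : (Ev m) => f (ν, l)) (lamhat ν₀)) ν₀
        = fderiv ℝ G p₀ (1, 0) := by
      have h1 : HasDerivAt (fun ν : ℝ => G (ν, lamhat ν₀)) (fderiv ℝ G p₀ (1, 0)) ν₀ :=
        (hGd p₀).hasFDerivAt.comp_hasDerivAt (l := G) (f := fun x => (id x, lamhat ν₀)) ν₀
          (HasDerivAt.prodMk (hasDerivAt_id ν₀) (hasDerivAt_const ν₀ (lamhat ν₀)))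
      rw [show (fun ν : ℝ => gradient (fun l : (Ev m) => f (ν, l)) (lamhat ν₀))
          = fun ν : ℝ => G (ν, lamhat ν₀) from funext fun ν => hGgrad ν (lamhat ν₀)]
      exact h1.deriv
    have hHG : ∀ v : (Ev m),
        (fderiv ℝ (fun l : (Ev m) => gradient (fun l' : (Ev m) => f (ν₀, l')) l) (lamhat ν₀)) v
        = fderiv ℝ G p₀ (0, v) := by
      intro v
      have h1 : HasFDerivAt (fun l : (Ev m) => G (ν₀, l))
          ((fderiv ℝ G p₀).comp (ContinuousLinearMap.inr ℝ ℝ (Ev m))) (lamhat ν₀) :=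
        (hGd p₀).hasFDerivAt.comp (lamhat ν₀) (hasFDerivAt_prodMk_right ν₀ (lamhat ν₀))
      rw [show (fun l : (Ev m) => gradient (fun l' : (Ev m) => f (ν₀, l')) l)
          = fun l : (Ev m) => G (ν₀, l) from funext fun l => hGgrad ν₀ l]
      rw [h1.fderiv]
      rfl
    -- deriv of the critical-point equation: mvec + H lam' = 0
    have hGγ : HasDerivAt (fun ν => G (γ ν)) (fderiv ℝ G p₀ (1, lam')) ν₀ :=
      (hGd p₀).hasFDerivAt.comp_hasDerivAt (l := G) (f := γ) ν₀ (hγ ν₀ hlam₀)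
    have hGzero : (fun ν => G (γ ν)) =ᶠ[nhds ν₀] fun _ => (0 : (Ev m)) := by
      filter_upwards [hcrit] with ν h2
      rw [hGgrad ν (lamhat ν)] at h2
      simpa [hγdef] using h2
    have hcritderiv : fderiv ℝ G p₀ (1, lam') = 0 := by
      rw [← hGγ.deriv, hGzero.deriv_eq, deriv_const]
    have hsplitγ : ((1 : ℝ), lam') = (1, 0) + (0, lam') := by simp [Prod.ext_iff]
    have hMH : fderiv ℝ G p₀ (1, 0) + fderiv ℝ G p₀ (0, lam') = 0 := by
      rw [← map_add, ← hsplitγ, hcritderiv]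
    -- lam' = - Hinv mvec
    have hlam' : lam' = -Hinv (fderiv ℝ G p₀ (1, 0)) := by
      have h1 : fderiv ℝ G p₀ (1, 0)
          + (fderiv ℝ (fun l : (Ev m) => gradient (fun l' : (Ev m) => f (ν₀, l')) l) (lamhat ν₀)) lam' = 0 := by
        rw [hHG lam']; exact hMH
      have h2 := congrArg (fun x => Hinv x) h1
      simp only [map_add, map_zero] at h2
      have h3 : Hinv ((fderiv ℝ (fun l : (Ev m) => gradient (fun l' : (Ev m) => f (ν₀, l')) l)
          (lamhat ν₀)) lam') = lam' := by
        have := ContinuousLinearMap.ext_iff.mp hHinv₂ lam'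
        simpa using this
      rw [h3] at h2
      linear_combination (norm := module) h2
    -- second derivative of g
    have hφγ : HasDerivAt (fun ν => φ (γ ν)) (f'' (1, lam') (1, 0)) ν₀ := by
      have := hφ'.comp_hasDerivAt (l := φ) (f := γ) ν₀ (hγ ν₀ hlam₀)
      simp at this; exact this
    have hdd : deriv (deriv (fun ν : ℝ => f (ν, lamhat ν))) ν₀ = f'' (1, lam') (1, 0) := by
      rw [hderivg.deriv_eq, hφγ.deriv]
    -- fνν = f'' (1,0) (1,0)
    have hfνν' : deriv (deriv (fun t : ℝ => f (t, lamhat ν₀))) ν₀ = f'' (1, 0) (1, 0) := by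
      have hstep : ∀ t : ℝ, deriv (fun t : ℝ => f (t, lamhat ν₀)) t = φ (t, lamhat ν₀) := by
        intro t
        have h1 : HasDerivAt (fun t : ℝ => f (t, lamhat ν₀))
            (fderiv ℝ f (t, lamhat ν₀) (1, 0)) t :=
          (hfd (t, lamhat ν₀)).hasFDerivAt.comp_hasDerivAt t
            (HasDerivAt.prodMk (hasDerivAt_id t) (hasDerivAt_const t (lamhat ν₀)))
        exact h1.deriv
      have h2 : HasDerivAt (fun t : ℝ => φ (t, lamhat ν₀)) (f'' (1, 0) (1, 0)) ν₀ := by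
        have := hφ'.comp_hasDerivAt (l := φ) (f := fun x => (id x, lamhat ν₀)) ν₀
          (HasDerivAt.prodMk (hasDerivAt_id ν₀) (hasDerivAt_const ν₀ (lamhat ν₀)))
        simp at this; exact this
      rw [funext hstep, h2.deriv]
    -- mixed term: f'' (1,0) (0,v) = ⟪mvec, v⟫
    have hmixed : ∀ v : (Ev m), f'' (1, 0) (0, v) = ⟪fderiv ℝ G p₀ (1, 0), v⟫ := by
      intro v
      have hA : HasFDerivAt (fun p : ℝ × (Ev m) => fderiv ℝ f p (0, v))
          ((ContinuousLinearMap.apply ℝ ℝ ((0 : ℝ), v)).comp f'') p₀ :=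
        (ContinuousLinearMap.apply ℝ ℝ ((0 : ℝ), v)).hasFDerivAt.comp p₀
          (hf'd p₀).hasFDerivAt
      have hB : HasFDerivAt (fun p : ℝ × (Ev m) => (innerSL ℝ v) (G p))
          ((innerSL ℝ v).comp (fderiv ℝ G p₀)) p₀ :=
        (innerSL ℝ v).hasFDerivAt.comp p₀ (hGd p₀).hasFDerivAt
      have heq : (fun p : ℝ × (Ev m) => fderiv ℝ f p (0, v))
          = fun p : ℝ × (Ev m) => (innerSL ℝ v) (G p) := by
        funext p
        rw [← hGinner p v, innerSL_apply_apply, real_inner_comm]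
      have := hA.fderiv.symm.trans (heq ▸ hB.fderiv)
      have h2 := congrFun (congrArg (fun L : (ℝ × (Ev m)) →L[ℝ] ℝ => (L : ℝ × (Ev m) → ℝ)) this)
        ((1 : ℝ), (0 : (Ev m)))
      simp only [ContinuousLinearMap.coe_comp', Function.comp_apply,
        ContinuousLinearMap.apply_apply, innerSL_apply_apply] at h2
      rw [h2, real_inner_comm]
    -- assemble
    rw [hdd, hsymm (1, lam') (1, 0), hsplitγ, map_add, hfνν', hmixed lam', hlam', ← hmvec]
    simp [inner_neg_right, sub_eq_add_neg]
end
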